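/- arXiv:1610.00903 — 2 statements merged into one kernel-verified Lean document; each statement's English description precedes it below -/
import Mathlib

section
/- For any positive integer n that is not a power of 2, with k = ⌊log₂ n⌋, the number of hyperbinary expansions of n of length k+1 equals b(n − 2^k), the total number of hyperbinary expansions of n − 2^k. -/
/-! A long expansion of `n`, where `2 ^ k ≤ n < 2 ^ (k + 1)`, must begin with the digit `1`
(a leading `2` would already exceed `n`), and its remaining `k` digits spell out `n - 2 ^ k`
with leading zeros allowed. Stripping those zeros is a bijection onto the hyperbinary
expansions of `n - 2 ^ k`, whose inverse left-pads with zeros to length `k`. -/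

/-- The integer represented by a word of digits (most significant first). -/
def hval (w : List ℕ) : ℕ := w.foldl (fun a d => 2 * a + d) 0

/-- `w` is a hyperbinary expansion of `n`: digits in {0,1,2}, nonzero leading
digit, representing `n`.  (The empty word is the unique expansion of `0`.) -/
def IsHyp (n : ℕ) (w : List ℕ) : Prop :=
  (∀ d ∈ w, d ≤ 2) ∧ w.head? ≠ some 0 ∧ hval w = n

/-- `b n`: the number of hyperbinary expansions of `n` (so `b 0 = 1`). -/
noncomputable def hb (n : ℕ) : ℕ := Set.ncard {w : List ℕ | IsHyp n w}

/-- A single rewriting step: `02 → 10` or `12 → 20`, a leading `2` treated as `02`. -/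
def Step (u v : List ℕ) : Prop :=
  (∃ x y : List ℕ, u = x ++ [0, 2] ++ y ∧ v = x ++ [1, 0] ++ y) ∨
  (∃ x y : List ℕ, u = x ++ [1, 2] ++ y ∧ v = x ++ [2, 0] ++ y) ∨
  (∃ y : List ℕ, u = 2 :: y ∧ v = 1 :: 0 :: y)

/-- Strict shortlex order: first by length, then lexicographically. -/
def Shortlex (u v : List ℕ) : Prop :=
  u.length < v.length ∨ (u.length = v.length ∧ List.Lex (· < ·) u v)

/-- Number of maximal blocks of consecutive `2`'s in a word. -/
def blocks2 : List ℕ → ℕ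
  | [] => 0
  | d :: rest => blocks2 rest + (if d = 2 ∧ rest.head? ≠ some 2 then 1 else 0)

theorem foldl_hval_eq (w : List ℕ) (c : ℕ) :
    w.foldl (fun a d => 2 * a + d) c = c * 2 ^ w.length + hval w := by
  induction w generalizing c with
  | nil => simp [hval]
  | cons d t ih =>
    simp only [hval, List.foldl_cons, List.length_cons, ih (2 * c + d), ih (2 * 0 + d)]
    ring

theorem hval_append (u v : List ℕ) : hval (u ++ v) = hval u * 2 ^ v.length + hval v := by
  rw [hval, List.foldl_append, foldl_hval_eq]
  rfl

theorem hval_cons (d : ℕ) (t : List ℕ) : hval (d :: t) = d * 2 ^ t.length + hval t := by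
  simpa [hval] using hval_append [d] t

theorem hval_replicate_zero_append (j : ℕ) (u : List ℕ) :
    hval (List.replicate j 0 ++ u) = hval u := by
  induction j with
  | zero => simp
  | succ j ih => simpa [List.replicate_succ, hval_cons] using ih

theorem dropWhile_replicate_zero_append (j : ℕ) {u : List ℕ} (hu : u.head? ≠ some 0) :
    (List.replicate j 0 ++ u).dropWhile (· == 0) = u := by
  induction j with
  | zero =>
    cases u with
    | nil => rfl
    | cons d t => simpa using hu
  | succ j ih => simpa [List.replicate_succ] using ih

theorem exists_eq_replicate_zero_append (t : List ℕ) :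
    ∃ j u, t = List.replicate j 0 ++ u ∧ u.head? ≠ some 0 := by
  induction t with
  | nil => exact ⟨0, [], rfl, by simp⟩
  | cons d t ih =>
    by_cases hd : d = 0
    · obtain ⟨j, u, rfl, hu⟩ := ih
      exact ⟨j + 1, u, by simp [hd, List.replicate_succ], hu⟩
    · exact ⟨0, d :: t, rfl, by simpa using hd⟩

theorem IsHyp.length_le {m k : ℕ} {u : List ℕ} (h : IsHyp m u) (hm : m < 2 ^ k) :
    u.length ≤ k := by
  obtain ⟨-, hhead, rfl⟩ := h
  cases u with
  | nil => simp
  | cons d t =>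
    have hd : 1 ≤ d := Nat.one_le_iff_ne_zero.mpr (by simpa using hhead)
    rw [hval_cons] at hm
    have : 2 ^ t.length < 2 ^ k :=
      calc 2 ^ t.length ≤ d * 2 ^ t.length := Nat.le_mul_of_pos_left _ hd
        _ ≤ d * 2 ^ t.length + hval t := Nat.le_add_right _ _
        _ < 2 ^ k := hm
    simpa using (Nat.pow_lt_pow_iff_right (by norm_num)).mp this

theorem isHyp_one_cons_leftpad {m k : ℕ} {u : List ℕ} (h : IsHyp m u) (hm : m < 2 ^ k) :
    IsHyp (2 ^ k + m) (1 :: u.leftpad k 0) ∧ (1 :: u.leftpad k 0).length = k + 1 := by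
  have hlen : (u.leftpad k 0).length = k := by
    rw [List.length_leftpad]
    exact max_eq_left (h.length_le hm)
  obtain ⟨hdig, -, hval_u⟩ := h
  refine ⟨⟨?_, by simp, ?_⟩, by rw [List.length_cons, hlen]⟩
  · simp only [List.leftpad, List.mem_cons, List.mem_append, List.mem_replicate]
    rintro d (rfl | ⟨-, rfl⟩ | hd)
    exacts [by norm_num, by norm_num, hdig d hd]
  · rw [hval_cons, hlen, List.leftpad, hval_replicate_zero_append, hval_u]
    ring

theorem IsHyp.exists_eq_one_cons_leftpad {n k : ℕ} {w : List ℕ} (h : IsHyp n w)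
    (hlen : w.length = k + 1) (hn : n < 2 ^ (k + 1)) :
    ∃ u, IsHyp (n - 2 ^ k) u ∧ w = 1 :: u.leftpad k 0 := by
  obtain ⟨hdig, hhead, rfl⟩ := h
  obtain ⟨d, t, rfl⟩ := List.exists_cons_of_length_eq_add_one hlen
  have htk : t.length = k := by simpa using hlen
  have hd1 : d = 1 := by
    have hd : 1 ≤ d := Nat.one_le_iff_ne_zero.mpr (by simpa using hhead)
    have : d < 2 := by
      by_contra! h2
      have := Nat.mul_le_mul_right (2 ^ k) h2
      rw [hval_cons, htk, pow_succ] at hn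
      linarith
    omega
  subst hd1
  obtain ⟨j, u, rfl, hu⟩ := exists_eq_replicate_zero_append t
  have hj : j = k - u.length := by simp at htk; omega
  refine ⟨u, ⟨fun d hd => hdig d (by simp [hd]), hu, ?_⟩, by rw [hj]; rfl⟩
  rw [hval_cons, htk, hval_replicate_zero_append]
  omega

theorem injOn_one_cons_leftpad (m k : ℕ) :
    Set.InjOn (fun u => 1 :: u.leftpad k 0) {u | IsHyp m u} := by
  intro u hu u' hu' h
  simp only [List.cons.injEq, true_and, List.leftpad] at h
  rw [← dropWhile_replicate_zero_append (k - u.length) hu.2.1,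
    ← dropWhile_replicate_zero_append (k - u'.length) hu'.2.1, h]

theorem setOf_isHyp_length_eq_image {n k : ℕ} (hkn : 2 ^ k ≤ n) (hnk : n < 2 ^ (k + 1)) :
    {w : List ℕ | IsHyp n w ∧ w.length = k + 1} =
      (fun u => 1 :: u.leftpad k 0) '' {u | IsHyp (n - 2 ^ k) u} := by
  ext w
  constructor
  · rintro ⟨h, hlen⟩
    obtain ⟨u, hu, rfl⟩ := h.exists_eq_one_cons_leftpad hlen hnk
    exact ⟨u, hu, rfl⟩
  · rintro ⟨u, hu, rfl⟩
    have hm : n - 2 ^ k < 2 ^ k := by rw [pow_succ] at hnk; omega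
    simpa [Nat.add_sub_cancel' hkn] using isHyp_one_cons_leftpad hu hm

theorem stmt9_general (n : ℕ) (hn : 0 < n) :
    Set.ncard {w : List ℕ | IsHyp n w ∧ w.length = Nat.log 2 n + 1} =
      hb (n - 2 ^ Nat.log 2 n) := by
  rw [setOf_isHyp_length_eq_image (Nat.pow_log_le_self 2 hn.ne')
      (Nat.lt_pow_succ_log_self (by norm_num) n),
    (injOn_one_cons_leftpad _ _).ncard_image, hb]

theorem stmt9 (n : ℕ) (hn : 0 < n) (hnp : ¬∃ k : ℕ, n = 2 ^ k) :
    Set.ncard {w : List ℕ | IsHyp n w ∧ w.length = Nat.log 2 n + 1} =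
      hb (n - 2 ^ Nat.log 2 n) :=
  stmt9_general n hn
end

section
/- Each single rewriting step 02 → 10 or 12 → 20 applied to a hyperbinary expansion strictly increases the expansion in the shortlex order (sort first by length, then lexicographically). Consequently the rewriting system on the expansions of any fixed n is terminating. -/
theorem shortlex_iff_toLex_lt {u v : List ℕ} :
    Shortlex u v ↔ toLex (u.length, u) < toLex (v.length, v) := by
  rw [Prod.Lex.toLex_lt_toLex, Shortlex, ← List.lt_iff_lex_lt]
  rfl

theorem shortlex_of_replace {a b c d : ℕ} (hac : a < c) (x y : List ℕ) :
    Shortlex (x ++ [a, b] ++ y) (x ++ [c, d] ++ y) := by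
  refine Or.inr ⟨by simp, ?_⟩
  simpa using List.Lex.append_left _ (List.Lex.rel (l₁ := b :: y) (l₂ := d :: y) hac) x

theorem Step.shortlex {u v : List ℕ} (h : Step u v) : Shortlex u v := by
  rcases h with ⟨x, y, rfl, rfl⟩ | ⟨x, y, rfl, rfl⟩ | ⟨y, rfl, rfl⟩
  · exact shortlex_of_replace zero_lt_one x y
  · exact shortlex_of_replace one_lt_two x y
  · exact Or.inl (by simp)

theorem pow_length_mul_le_foldl (t : List ℕ) (a : ℕ) :
    2 ^ t.length * a ≤ t.foldl (fun a d => 2 * a + d) a := by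
  induction t generalizing a with
  | nil => simp
  | cons d t ih =>
    calc 2 ^ (d :: t).length * a = 2 ^ t.length * (2 * a) := by
          rw [List.length_cons, pow_succ, mul_assoc]
      _ ≤ 2 ^ t.length * (2 * a + d) := Nat.mul_le_mul_left _ (Nat.le_add_right _ _)
      _ ≤ _ := ih _

theorem IsHyp.length_le_s14 {n : ℕ} {w : List ℕ} (h : IsHyp n w) : w.length ≤ n := by
  obtain ⟨-, hhead, rfl⟩ := h
  cases w with
  | nil => simp
  | cons d t =>
    have hd : 1 ≤ d := Nat.one_le_iff_ne_zero.2 fun h0 => hhead (by simp [h0])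
    have hval_ge : 2 ^ t.length ≤ hval (d :: t) :=
      calc 2 ^ t.length ≤ 2 ^ t.length * d := Nat.le_mul_of_pos_right _ hd
        _ ≤ hval (d :: t) := by simpa [hval] using pow_length_mul_le_foldl t d
    exact (Nat.lt_two_pow_self).trans_le hval_ge

theorem finite_setOf_isHyp (n : ℕ) : {w : List ℕ | IsHyp n w}.Finite := by
  refine ((List.finite_length_le {d : ℕ // d ≤ 2} n).image (List.map Subtype.val)).subset ?_
  intro w hw
  have hlen := hw.length_le_s14
  lift w to List {d : ℕ // d ≤ 2} using hw.1
  exact ⟨w, by simpa using hlen, rfl⟩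

theorem stmt14 :
    (∀ u v : List ℕ, Step u v → Shortlex u v) ∧
    ∀ n : ℕ, ¬∃ f : ℕ → List ℕ,
      (∀ i : ℕ, IsHyp n (f i)) ∧ ∀ i : ℕ, Step (f i) (f (i + 1)) := by
  refine ⟨fun u v h => h.shortlex, fun n ⟨f, hhyp, hstep⟩ => ?_⟩
  have hmono : StrictMono fun i => toLex ((f i).length, f i) :=
    strictMono_nat_of_lt_succ fun i => shortlex_iff_toLex_lt.1 (hstep i).shortlex
  have hinj : Function.Injective f := fun i j hij => hmono.injective (by simp only [hij])
  exact Set.infinite_range_of_injective hinj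
    ((finite_setOf_isHyp n).subset (Set.range_subset_iff.2 hhyp))
end
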